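/- arXiv:1406.4198 — 7 statements merged into one kernel-verified Lean document; each statement's English description precedes it below -/
import Mathlib

section
/- Let n be a positive integer and let v : S¹ → U(n) be any continuous map into the unitary group of n×n complex matrices. Then for every unitary u ∈ U(n), there exists ζ ∈ S¹ such that ‖v(ζ) u v(ζ)* − ζ·u‖ ≥ 2. -/
open scoped Matrix.Norms.L2Operator

/-!
Suppose `‖v(ζ) u v(ζ)* − ζ u‖ < 2` for every `ζ`. Then `w(ζ) = ζ⁻¹ v(ζ) u v(ζ)* u*` is a loop of
unitaries within distance `2` of `1`, so the spectrum of each `w(ζ)` avoids `(-∞, 0]` and the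
segments `1 + t (w(ζ) - 1)`, `t ∈ [0, 1]`, consist of invertible matrices. Taking determinants
gives a homotopy in `ℂ \ {0}` from the constant loop `1` to `ζ ↦ det w(ζ) = ζ^(-n)`. Lifting this
homotopy through the covering `exp : ℂ → ℂ \ {0}` forces the winding number `-n` to vanish.
-/

theorem Circle.eq_zero_of_zpow_nullhomotopic {k : ℤ} {H : unitInterval × Circle → ℂ}
    (hH : Continuous H) (hH₀ : ∀ p, H p ≠ 0) (h_zero : ∀ ζ, H (0, ζ) = 1)
    (h_one : ∀ ζ, H (1, ζ) = (ζ : ℂ) ^ k) : k = 0 := by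
  have cov := Complex.isCoveringMap_exp
  let F : C(unitInterval × ℝ, {z : ℂ // z ≠ 0}) :=
    ⟨fun p => ⟨H (p.1, Circle.exp p.2), hH₀ _⟩, by fun_prop⟩
  let G := cov.liftHomotopy F (.const ℝ 0) fun s => by ext; simp [F, h_zero]
  have hG (p) : Complex.exp (G p) = H (p.1, Circle.exp p.2) :=
    congrArg Subtype.val (congrFun (cov.liftHomotopy_lifts ..) p)
  have hG₀ (s) : G (0, s) = 0 := cov.liftHomotopy_zero ..
  -- Both sides lift the same homotopy and vanish at `t = 0`.
  have hG_periodic : (fun p : unitInterval × ℝ => G (p.1, p.2 + 2 * Real.pi)) = G :=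
    cov.eq_of_comp_eq (by fun_prop) G.continuous (funext fun p => by ext; simp [hG]) (0, 0)
      (by simp [hG₀])
  have hG_one : (fun s : ℝ => G (1, s)) = fun s : ℝ => G (1, 0) + k * (s * Complex.I) :=
    cov.eq_of_comp_eq (by fun_prop) (by fun_prop)
      (funext fun s => by
        ext; simp [hG, Complex.exp_add, h_one, Circle.coe_exp, ← Complex.exp_int_mul])
      0 (by simp)
  have h_two_pi := congrFun hG_one (2 * Real.pi)
  rw [← congrFun hG_periodic (1, 0)] at h_two_pi
  simpa using h_two_pi

section CStarAlgebra

variable {A : Type*} [CStarAlgebra A]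

lemma Unitary.isUnit_one_add_smul_sub_one {a : A} (ha : a ∈ unitary A) (h : ‖a - 1‖ < 2)
    {t : ℝ} (ht : t ∈ Set.Icc 0 1) : IsUnit (1 + (t : ℂ) • (a - 1)) := by
  rcases ht.1.eq_or_lt with rfl | ht₀
  · simp
  have ht₀' : (t : ℂ) ≠ 0 := by exact_mod_cast ht₀.ne'
  have hμ : ((1 - t⁻¹ : ℝ) : ℂ) ∉ spectrum ℂ a := fun hμ =>
    Complex.ofReal_mem_slitPlane.not.2 (by nlinarith [one_le_inv_iff₀.2 ⟨ht₀, ht.2⟩])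
      ((Unitary.spectrum_subset_slitPlane_iff_norm_lt_two ha).2 h hμ)
  have key : 1 + (t : ℂ) • (a - 1) = (-(t : ℂ)) • (algebraMap ℂ A ((1 - t⁻¹ : ℝ) : ℂ) - a) := by
    simp only [Algebra.algebraMap_eq_smul_one, smul_sub, smul_smul]
    push_cast
    field_simp
    module
  rw [key]
  exact (spectrum.notMem_iff.1 hμ).smul (Units.mk0 _ (neg_ne_zero.2 ht₀'))

lemma norm_inv_smul_mul_star_sub_one {c : ℂ} (hc : ‖c‖ = 1) {u : A} (hu : u ∈ unitary A)
    (x : A) : ‖c⁻¹ • (x * star u) - 1‖ = ‖x - c • u‖ := by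
  have hc₀ : c ≠ 0 := norm_ne_zero_iff.1 (hc ▸ one_ne_zero)
  have : c⁻¹ • (x * star u) - 1 = c⁻¹ • ((x - c • u) * star u) := by
    rw [sub_mul, smul_mul_assoc, Unitary.mul_star_self_of_mem hu, smul_sub, smul_smul,
      inv_mul_cancel₀ hc₀, one_smul]
  rw [this, norm_smul, norm_inv, hc, inv_one, one_mul,
    CStarRing.norm_mul_mem_unitary _ (Unitary.star_mem hu)]

end CStarAlgebra

lemma Matrix.det_mul_mul_star_mul_star {m R : Type*} [Fintype m] [DecidableEq m] [CommRing R]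
    [StarRing R] {V U : Matrix m m R} (hV : V ∈ unitary (Matrix m m R))
    (hU : U ∈ unitary (Matrix m m R)) : (V * U * star V * star U).det = 1 := by
  have h {W : Matrix m m R} (hW : W ∈ unitary (Matrix m m R)) : W.det * (star W).det = 1 := by
    rw [← det_mul, Unitary.mul_star_self_of_mem hW, det_one]
  rw [det_mul, det_mul, det_mul]
  linear_combination (U.det * (star U).det) * h hV + h hU

/-- For any continuous map `v : S¹ → U(n)` and any unitary `u ∈ U(n)`,
there exists `ζ ∈ S¹` with `‖v(ζ) u v(ζ)* − ζ·u‖ ≥ 2` (operator norm on matrices). -/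
theorem stmt_0 (n : ℕ) (hn : 0 < n)
    (v : Circle → Matrix.unitaryGroup (Fin n) ℂ) (hv : Continuous v)
    (u : Matrix.unitaryGroup (Fin n) ℂ) :
    ∃ ζ : Circle,
      2 ≤ ‖(v ζ : Matrix (Fin n) (Fin n) ℂ) * (u : Matrix (Fin n) (Fin n) ℂ) *
            star (v ζ : Matrix (Fin n) (Fin n) ℂ) -
            (ζ : ℂ) • (u : Matrix (Fin n) (Fin n) ℂ)‖ := by
  by_contra! hfar
  let w (ζ : Circle) : Matrix (Fin n) (Fin n) ℂ :=
    (ζ : ℂ)⁻¹ • ((v ζ : Matrix (Fin n) (Fin n) ℂ) * u * star (v ζ : Matrix (Fin n) (Fin n) ℂ) *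
      star (u : Matrix (Fin n) (Fin n) ℂ))
  have hw_unitary (ζ : Circle) : w ζ ∈ unitary (Matrix (Fin n) (Fin n) ℂ) := by
    have hζ : (ζ : ℂ)⁻¹ ∈ unitary ℂ := by
      simp [Unitary.mem_iff_star_mul_self, ← mul_inv, Complex.conj_mul', Circle.norm_coe]
    exact Unitary.smul_mem (R := ℂ) ⟨_, hζ⟩ <|
      mul_mem (mul_mem (mul_mem (v ζ).2 u.2) (Unitary.star_mem (v ζ).2)) (Unitary.star_mem u.2)
  have hw_near (ζ : Circle) : ‖w ζ - 1‖ < 2 :=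
    (norm_inv_smul_mul_star_sub_one ζ.norm_coe u.2 _).trans_lt (hfar ζ)
  have hw_det (ζ : Circle) : (w ζ).det = (ζ : ℂ) ^ (-(n : ℤ)) := by
    simp [w, Matrix.det_mul_mul_star_mul_star (v ζ).2 u.2]
  have h_winding := Circle.eq_zero_of_zpow_nullhomotopic (k := -n)
    (H := fun p => (1 + (p.1 : ℂ) • (w p.2 - 1)).det) (by fun_prop (disch := simp))
    (fun p => ((Matrix.isUnit_iff_isUnit_det _).1
      (Unitary.isUnit_one_add_smul_sub_one (hw_unitary _) (hw_near _) p.1.2)).ne_zero)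
    (by simp) (by simp [hw_det])
  omega
end

section
/- Let A be a unital C*-algebra, let n be a positive integer, let β : ℤ/n → Aut(A) be an action, and suppose there exist pairwise orthogonal projections e₀, …, e_{n−1} in A summing to 1 such that ‖β_k(e_j) − e_{j+k}‖ < ε/n for all j, k ∈ ℤ/n (indices mod n) and ‖e_j a − a e_j‖ < ε/n for all a in a finite set F and all j. Then the unitary u = Σ_{j=0}^{n−1} e^{−2πij/n} e_j satisfies ‖β_k(u) − e^{2πik/n} u‖ < ε for all k ∈ ℤ/n and ‖ub − bu‖ < ε for all b ∈ F. -/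
/-!
The coefficients of `u` are the values `χ (-j)` of the standard character `χ j = e^{2πij/n}` of
`ℤ/n`. Reindexing `j ↦ j + k` gives `e^{2πik/n} u = Σ χ (-j) e_{j+k}`, hence
`β_k(u) - e^{2πik/n} u = Σ χ (-j) (β_k(e_j) - e_{j+k})`, and likewise
`u b - b u = Σ χ (-j) (e_j b - b e_j)`. Each is a sum of `n` terms of norm `< ε / n`, as `|χ| = 1`.
-/

open Complex

theorem AddChar.sum_map_neg_smul_comp_add_right {G R M : Type*} [AddCommGroup G] [Fintype G]
    [Monoid R] [AddCommMonoid M] [DistribMulAction R M] (χ : AddChar G R) (x : G → M) (k : G) :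
    ∑ j, χ (-j) • x (j + k) = χ k • ∑ j, χ (-j) • x j := by
  rw [Finset.smul_sum]
  refine Fintype.sum_equiv (Equiv.addRight k) _ _ fun j ↦ ?_
  simp only [Equiv.coe_addRight, smul_smul, ← AddChar.map_add_eq_mul, neg_add_rev,
    add_neg_cancel_left]

theorem norm_sum_smul_lt_of_norm_le_one {ι 𝕜 E : Type*} [Fintype ι] [Nonempty ι]
    [NormedField 𝕜] [SeminormedAddCommGroup E] [NormedSpace 𝕜 E] {c : ι → 𝕜} {x : ι → E}
    {ε : ℝ} (hc : ∀ i, ‖c i‖ ≤ 1) (hx : ∀ i, ‖x i‖ < ε / Fintype.card ι) :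
    ‖∑ i, c i • x i‖ < ε := by
  calc ‖∑ i, c i • x i‖ ≤ ∑ i, ‖c i‖ * ‖x i‖ := (norm_sum_le _ _).trans
          (Finset.sum_le_sum fun i _ ↦ norm_smul_le _ _)
    _ < ∑ _i : ι, ε / Fintype.card ι := Finset.sum_lt_sum_of_nonempty Finset.univ_nonempty
          fun i _ ↦ (mul_le_of_le_one_left (norm_nonneg _) (hc i)).trans_lt (hx i)
    _ = ε := by
      rw [Finset.sum_const, Finset.card_univ, nsmul_eq_mul, mul_div_cancel₀]
      exact Nat.cast_ne_zero.mpr Fintype.card_ne_zero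

theorem ZMod.exp_neg_two_pi_I_val_div {n : ℕ} [NeZero n] (j : ZMod n) :
    exp (-(2 * Real.pi * I * (j.val : ℕ) / n)) = stdAddChar (-j) := by
  rw [AddChar.map_neg_eq_inv, stdAddChar_apply, toCircle_apply, exp_neg]

theorem sum_smul_mul_sub_mul_sum_smul {ι R A : Type*} [CommRing R] [Ring A] [Algebra R A]
    (s : Finset ι) (c : ι → R) (x : ι → A) (b : A) :
    (∑ i ∈ s, c i • x i) * b - b * ∑ i ∈ s, c i • x i = ∑ i ∈ s, c i • (x i * b - b * x i) := by
  simp only [Finset.sum_mul, Finset.mul_sum, smul_mul_assoc, mul_smul_comm, smul_sub,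
    Finset.sum_sub_distrib]

theorem stmt_7_general {A : Type*} [CStarAlgebra A] (n : ℕ) [NeZero n]
    (β : ZMod n → A ≃⋆ₐ[ℂ] A)
    (e : ZMod n → A) (ε : ℝ) (F : Finset A)
    (hβ : ∀ j k : ZMod n, ‖β k (e j) - e (j + k)‖ < ε / n)
    (hcomm : ∀ j : ZMod n, ∀ a ∈ F, ‖e j * a - a * e j‖ < ε / n) :
    let u : A := ∑ j : ZMod n,
      Complex.exp (-(2 * Real.pi * Complex.I * (j.val : ℕ) / n)) • e j
    (∀ k : ZMod n,
        ‖β k u - Complex.exp (2 * Real.pi * Complex.I * (k.val : ℕ) / n) • u‖ < ε) ∧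
    ∀ b ∈ F, ‖u * b - b * u‖ < ε := by
  intro u
  have hu : u = ∑ j, ZMod.stdAddChar (-j) • e j := by
    simp only [u, ZMod.exp_neg_two_pi_I_val_div]
  have hcoef (j : ZMod n) : ‖ZMod.stdAddChar (-j)‖ ≤ 1 := (Circle.norm_coe _).le
  have hcard : (Fintype.card (ZMod n) : ℝ) = n := by rw [ZMod.card]
  refine ⟨fun k ↦ ?_, fun b hb ↦ ?_⟩
  · rw [← ZMod.toCircle_apply, ← ZMod.stdAddChar_apply, hu, map_sum,
      ← AddChar.sum_map_neg_smul_comp_add_right, ← Finset.sum_sub_distrib]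
    simp only [map_smul, ← smul_sub]
    exact norm_sum_smul_lt_of_norm_le_one hcoef fun j ↦ hcard ▸ hβ j k
  · rw [hu, sum_smul_mul_sub_mul_sum_smul]
    exact norm_sum_smul_lt_of_norm_le_one hcoef fun j ↦ hcard ▸ hcomm j b hb

/-- From Rokhlin projections for a `ℤ/n`-action one builds a unitary
`u = Σ e^{−2πij/n} e_j` witnessing the unitary Rokhlin property. -/
theorem stmt_7 {A : Type*} [CStarAlgebra A] (n : ℕ) [NeZero n]
    (β : ZMod n → A ≃⋆ₐ[ℂ] A)
    (hone : ∀ a : A, β 0 a = a)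
    (hadd : ∀ j k : ZMod n, ∀ a : A, β (j + k) a = β j (β k a))
    (e : ZMod n → A) (ε : ℝ) (F : Finset A)
    (hsa : ∀ j, IsSelfAdjoint (e j)) (hidem : ∀ j, IsIdempotentElem (e j))
    (horth : ∀ j k, j ≠ k → e j * e k = 0) (hsum : ∑ j, e j = 1)
    (hβ : ∀ j k : ZMod n, ‖β k (e j) - e (j + k)‖ < ε / n)
    (hcomm : ∀ j : ZMod n, ∀ a ∈ F, ‖e j * a - a * e j‖ < ε / n) :
    let u : A := ∑ j : ZMod n,
      Complex.exp (-(2 * Real.pi * Complex.I * (j.val : ℕ) / n)) • e j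
    (∀ k : ZMod n,
        ‖β k u - Complex.exp (2 * Real.pi * Complex.I * (k.val : ℕ) / n) • u‖ < ε) ∧
    ∀ b ∈ F, ‖u * b - b * u‖ < ε :=
  stmt_7_general n β e ε F hβ hcomm
end

section
/- Let A be a C*-algebra, let G be a finite group, and let α : G → Aut(A) be an action with the Rokhlin property in Izumi's sense (for every ε > 0 and finite F ⊆ A there are orthogonal projections (e_g)_{g∈G} summing to 1 with ‖α_g(e_h) − e_{gh}‖ < ε and ‖e_g a − a e_g‖ < ε for a ∈ F). Let H ≤ G be a subgroup, let ε > 0 and a finite F ⊆ A be given, let (e_g)_{g∈G} be such projections for the tolerance ε/[G:H] and the set F, and set f_h = Σ_{x̄ ∈ G/H} e_{hx} (summing over a set of right coset representatives). Then the projections (f_h)_{h∈H} witness the Rokhlin property for the restricted action α|_H with tolerance ε: they are orthogonal, sum to 1, satisfy ‖α_k(f_h) − f_{kh}‖ ≤ [G:H]·(ε/[G:H]) = ε for h, k ∈ H, and ‖a f_h − f_h a‖ < ε for a ∈ F. -/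
/-- Uniqueness of transversal representative. -/
lemma stmt8_aux {G : Type*} [Group G] (H : Subgroup G) (R : Finset G)
    (hR : ∀ g : G, ∃! r, r ∈ R ∧ (QuotientGroup.rightRel H) r g)
    {r r' h h' : G} (hr : r ∈ R) (hr' : r' ∈ R) (hh : h ∈ H) (hh' : h' ∈ H)
    (heq : h * r = h' * r') : r = r' ∧ h = h' := by
  have h1 : r' = r := by
    refine ((hR r).unique ⟨hr', ?_⟩ ⟨hr, ?_⟩)
    · rw [QuotientGroup.rightRel_apply]
      have : r = h⁻¹ * (h' * r') := by rw [← heq]; group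
      rw [this]
      have : h⁻¹ * (h' * r') * r'⁻¹ = h⁻¹ * h' := by group
      rw [this]
      exact H.mul_mem (H.inv_mem hh) hh'
    · rw [QuotientGroup.rightRel_apply]
      simpa using H.one_mem
  refine ⟨h1.symm, ?_⟩
  subst h1
  exact mul_right_cancel heq

/-- restriction of a Rokhlin action of a finite group to a subgroup:
the projections `f_h = Σ_{x̄ ∈ G/H} e_{hx}` (sum over a transversal) witness the
Rokhlin property for `α|_H`. -/
theorem stmt_8 {A : Type*} [CStarAlgebra A] {G : Type*} [Group G] [Fintype G]
    [DecidableEq G] (H : Subgroup G) [DecidablePred (· ∈ H)]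
    (α : G → A ≃⋆ₐ[ℂ] A)
    (hone : ∀ a : A, α 1 a = a)
    (hmul : ∀ g g' : G, ∀ a : A, α (g * g') a = α g (α g' a))
    (ε : ℝ) (hε : 0 < ε) (F : Finset A) (e : G → A)
    (hsa : ∀ g, IsSelfAdjoint (e g)) (hidem : ∀ g, IsIdempotentElem (e g))
    (horth : ∀ g g', g ≠ g' → e g * e g' = 0) (hsum : ∑ g, e g = 1)
    (happrox : ∀ g h : G, ‖α g (e h) - e (g * h)‖ < ε / H.index)
    (hcommut : ∀ g : G, ∀ a ∈ F, ‖e g * a - a * e g‖ < ε / H.index)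
    (R : Finset G)
    (hR : ∀ g : G, ∃! r, r ∈ R ∧ (QuotientGroup.rightRel H) r g) :
    let f : G → A := fun h => ∑ r ∈ R, e (h * r)
    (∀ h, IsSelfAdjoint (f h) ∧ IsIdempotentElem (f h)) ∧
    (∀ h k : G, h ∈ H → k ∈ H → h ≠ k → f h * f k = 0) ∧
    (∑ h : H, f (h : G) = 1) ∧
    (∀ h k : G, h ∈ H → k ∈ H → ‖α k (f h) - f (k * h)‖ ≤ ε) ∧
    (∀ h : G, h ∈ H → ∀ a ∈ F, ‖a * f h - f h * a‖ < ε) := by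
  intro f
  -- cardinality: |H| * |R| = |G|
  have hbij : ∀ g : G, ∃! p : G × G, (p.1 ∈ (H : Set G) ∧ p.2 ∈ R) ∧ p.1 * p.2 = g := by
    intro g
    obtain ⟨r, ⟨hrR, hrel⟩, huniq⟩ := hR g
    rw [QuotientGroup.rightRel_apply] at hrel
    refine ⟨⟨g * r⁻¹, r⟩, ⟨⟨hrel, hrR⟩, by group⟩, ?_⟩
    rintro ⟨h, r'⟩ ⟨⟨hh, hr'⟩, heq⟩
    have h2 : h * r' = (g * r⁻¹) * r := by rw [heq]; group
    obtain ⟨e1, e2⟩ := stmt8_aux H R hR hr' hrR hh hrel h2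
    exact Prod.ext e2 e1
  -- sum over H × R equals sum over G
  have hsum' : ∑ h : H, f (h : G) = 1 := by
    rw [← hsum]
    rw [show (∑ h : H, f (h : G)) = ∑ p ∈ (Finset.univ : Finset H) ×ˢ R, e ((p.1 : G) * p.2) by
      rw [Finset.sum_product]]
    refine Finset.sum_bij (fun p _ => (p.1 : G) * p.2) ?_ ?_ ?_ ?_
    · intro p _; exact Finset.mem_univ _
    · rintro ⟨h1, r1⟩ hp1 ⟨h2, r2⟩ hp2 heq
      simp only [Finset.mem_product, Finset.mem_univ, true_and] at hp1 hp2
      obtain ⟨e1, e2⟩ := stmt8_aux H R hR hp1 hp2 h1.2 h2.2 heq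
      simp [Prod.ext_iff, Subtype.ext_iff, e1, e2]
    · intro g _
      obtain ⟨⟨h, r⟩, ⟨⟨hh, hr⟩, heq⟩, _⟩ := hbij g
      exact ⟨(⟨h, hh⟩, r), Finset.mem_product.mpr ⟨Finset.mem_univ _, hr⟩, heq⟩
    · intros; rfl
  -- card R = index
  have hind0 : H.index ≠ 0 := H.index_ne_zero_of_finite
  have hcardR : R.card = H.index := by
    have hG : Nat.card H * H.index = Nat.card G := H.card_mul_index
    have hHR : Nat.card H * R.card = Nat.card G := by
      rw [Nat.card_eq_fintype_card, Nat.card_eq_fintype_card, ← Fintype.card_coe R]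
      rw [← Fintype.card_prod]
      refine Fintype.card_of_bijective (f := fun p : H × R => (p.1 : G) * (p.2 : G)) ?_
      constructor
      · rintro ⟨h1, r1⟩ ⟨h2, r2⟩ heq
        obtain ⟨e1, e2⟩ := stmt8_aux H R hR r1.2 r2.2 h1.2 h2.2 heq
        simp [Prod.ext_iff, Subtype.ext_iff, e1, e2]
      · intro g
        obtain ⟨⟨h, r⟩, ⟨⟨hh, hr⟩, heq⟩, _⟩ := hbij g
        exact ⟨⟨⟨h, hh⟩, ⟨r, hr⟩⟩, heq⟩
    have hHpos : 0 < Nat.card H := Nat.card_pos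
    exact Nat.eq_of_mul_eq_mul_left hHpos (hHR.trans hG.symm)
  have hRne : R.Nonempty := by
    rw [← Finset.card_pos, hcardR]; exact Nat.pos_of_ne_zero hind0
  have hεi : (0:ℝ) < ε / H.index := by
    apply div_pos hε
    exact_mod_cast Nat.pos_of_ne_zero hind0
  have hmulinj : ∀ h : G, Function.Injective (fun r : G => h * r) :=
    fun h => mul_right_injective h
  refine ⟨?_, ?_, hsum', ?_, ?_⟩
  · intro h
    constructor
    · show star (f h) = f h
      simp only [f, star_sum]
      exact Finset.sum_congr rfl fun r _ => hsa _
    · show f h * f h = f h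
      simp only [f, Finset.sum_mul_sum]
      refine Finset.sum_congr rfl fun r hr => ?_
      rw [Finset.sum_eq_single r ?_ ?_]
      · exact hidem _
      · intro r' _ hne
        exact horth _ _ (fun hc => hne (mul_left_cancel hc).symm)
      · intro hc; exact absurd hr hc
  · intro h k hh hk hne
    simp only [f, Finset.sum_mul_sum]
    refine Finset.sum_eq_zero fun r hr => Finset.sum_eq_zero fun r' hr' => ?_
    refine horth _ _ fun hc => ?_
    exact hne (stmt8_aux H R hR hr hr' hh hk hc).2
  · intro h k hh hk
    have : α k (f h) - f (k * h) = ∑ r ∈ R, (α k (e (h * r)) - e (k * (h * r))) := by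
      rw [Finset.sum_sub_distrib]
      simp only [f, map_sum]
      congr 1
      exact Finset.sum_congr rfl fun r _ => by rw [mul_assoc]
    rw [this]
    calc ‖∑ r ∈ R, (α k (e (h * r)) - e (k * (h * r)))‖
        ≤ ∑ r ∈ R, ‖α k (e (h * r)) - e (k * (h * r))‖ := norm_sum_le _ _
      _ ≤ ∑ _r ∈ R, (ε / H.index) := Finset.sum_le_sum fun r _ => (happrox k (h * r)).le
      _ = R.card * (ε / H.index) := by rw [Finset.sum_const, nsmul_eq_mul]
      _ = ε := by
          rw [hcardR]
          field_simp
  · intro h hh a ha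
    have : a * f h - f h * a = ∑ r ∈ R, (a * e (h * r) - e (h * r) * a) := by
      rw [Finset.sum_sub_distrib, Finset.mul_sum, Finset.sum_mul]
    rw [this]
    calc ‖∑ r ∈ R, (a * e (h * r) - e (h * r) * a)‖
        ≤ ∑ r ∈ R, ‖a * e (h * r) - e (h * r) * a‖ := norm_sum_le _ _
      _ < ∑ _r ∈ R, (ε / H.index) := by
          refine Finset.sum_lt_sum_of_nonempty hRne fun r _ => ?_
          rw [← norm_neg]
          simpa [neg_sub] using hcommut (h * r) a ha
      _ = ε := by
          rw [Finset.sum_const, nsmul_eq_mul, hcardR]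
          field_simp
end

section
/- Let A be a unital C*-algebra, let α : 𝕋 → Aut(A) be a continuous action, and let v be a unitary in A with ‖α_ζ(v) − ζ·v‖ ≤ ε₀ for all ζ ∈ 𝕋, where ε₀ < 1/2. Define x = ∫_𝕋 conj(ζ)·α_ζ(v) dμ(ζ), where μ is normalized Haar measure on 𝕋. Then ‖x‖ ≤ 1, ‖x − v‖ ≤ ε₀, ‖x*x − 1‖ ≤ 2ε₀, and α_ζ(x) = ζ·x for all ζ ∈ 𝕋. -/
/-!
Multiplying `α_ζ v` by `conj ζ` and averaging against Haar measure projects onto the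
`ζ ↦ ζ`-eigenspace of the action: left invariance of `μ` turns `α_η x` into `η • x`.
Since `conj ζ • α_ζ v - v = conj ζ • (α_ζ v - ζ • v)`, the average stays within `ε₀` of `v`,
and as `v` is unitary and `‖x‖ ≤ 1`, the splitting
`x⋆x - 1 = x⋆ (x - v) + (x - v)⋆ v` gives `‖x⋆x - 1‖ ≤ 2 ‖x - v‖`.
-/

open MeasureTheory ComplexConjugate
open scoped CStarAlgebra

section CStarRing

variable {E : Type*} [NormedRing E] [StarRing E] [CStarRing E]

lemma CStarRing.norm_le_one_of_mem_unitary {U : E} (hU : U ∈ unitary E) : ‖U‖ ≤ 1 := by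
  rcases subsingleton_or_nontrivial E with _ | _
  · simp [Subsingleton.elim U 0]
  · exact (CStarRing.norm_of_mem_unitary hU).le

lemma norm_star_mul_self_sub_one_le {x v : E} (hv : v ∈ unitary E) (hx : ‖x‖ ≤ 1) :
    ‖star x * x - 1‖ ≤ 2 * ‖x - v‖ := by
  have hsplit : star x * x - 1 = star x * (x - v) + star (x - v) * v := by
    rw [star_sub, ← Unitary.star_mul_self_of_mem hv]
    noncomm_ring
  calc ‖star x * x - 1‖ ≤ ‖star x‖ * ‖x - v‖ + ‖star (x - v) * v‖ := by
        rw [hsplit]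
        exact (norm_add_le _ _).trans (add_le_add_left (norm_mul_le _ _) _)
    _ = ‖x‖ * ‖x - v‖ + ‖x - v‖ := by
        rw [norm_star, CStarRing.norm_mul_mem_unitary _ hv, norm_star]
    _ ≤ 2 * ‖x - v‖ := by nlinarith [norm_nonneg (x - v)]

end CStarRing

lemma norm_integral_sub_le_of_norm_sub_le {X E : Type*} [MeasurableSpace X] {μ : Measure X}
    [IsProbabilityMeasure μ] [NormedAddCommGroup E] [NormedSpace ℝ E] [CompleteSpace E]
    {f : X → E} (hf : Integrable f μ) {c : E} {C : ℝ} (h : ∀ᵐ x ∂μ, ‖f x - c‖ ≤ C) :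
    ‖∫ x, f x ∂μ - c‖ ≤ C := by
  have hsub : ∫ x, f x ∂μ - c = ∫ x, (f x - c) ∂μ := by
    rw [integral_sub hf (integrable_const c), integral_const, probReal_univ, one_smul]
  simpa [hsub] using norm_integral_le_of_norm_le_const h

section Circle

variable {E : Type*} [NormedAddCommGroup E] [NormedSpace ℂ E]

lemma Circle.coe_mul_conj (ζ : Circle) : (ζ : ℂ) * conj (ζ : ℂ) = 1 := by
  rw [← Circle.coe_inv_eq_conj, ← Circle.coe_mul, mul_inv_cancel, Circle.coe_one]

lemma Circle.norm_conj_smul_sub (ζ : Circle) (w v : E) :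
    ‖conj (ζ : ℂ) • w - v‖ = ‖w - (ζ : ℂ) • v‖ := by
  rw [← one_mul ‖_ - v‖, ← Circle.norm_coe ζ, ← norm_smul, smul_sub, smul_smul,
    Circle.coe_mul_conj, one_smul]

variable [MeasurableSpace Circle] (μ : Measure Circle)

lemma integrable_conj_smul_of_continuous [OpensMeasurableSpace Circle] [IsFiniteMeasure μ]
    {f : Circle → E} (hf : Continuous f) : Integrable (fun ζ : Circle => conj (ζ : ℂ) • f ζ) μ := by
  have hcont : Continuous fun ζ : Circle => conj (ζ : ℂ) • f ζ := by fun_prop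
  exact hcont.integrable_of_hasCompactSupport (.of_compactSpace _)

lemma map_integral_conj_smul_eq_smul [CompleteSpace E] {F : Type*} [FunLike F E E]
    [ContinuousLinearMapClass F ℂ E E] [MeasurableMul Circle] [μ.IsMulLeftInvariant]
    (α : Circle → F)
    (hmul : ∀ ζ η : Circle, ∀ x : E, α (ζ * η) x = α ζ (α η x)) {v : E}
    (hint : Integrable (fun ζ : Circle => conj (ζ : ℂ) • α ζ v) μ) (η : Circle) :
    α η (∫ ζ, conj (ζ : ℂ) • α ζ v ∂μ) = (η : ℂ) • ∫ ζ, conj (ζ : ℂ) • α ζ v ∂μ := by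
  have hshift : ∀ ζ : Circle,
      α η (conj (ζ : ℂ) • α ζ v) = (η : ℂ) • (conj ((η * ζ : Circle) : ℂ) • α (η * ζ) v) := by
    intro ζ
    rw [map_smul, ← hmul, smul_smul, Circle.coe_mul, map_mul, ← mul_assoc, Circle.coe_mul_conj,
      one_mul]
  calc α η (∫ ζ, conj (ζ : ℂ) • α ζ v ∂μ)
      = ∫ ζ, α η (conj (ζ : ℂ) • α ζ v) ∂μ :=
        ((ContinuousLinearMap.mk (α η : E →ₗ[ℂ] E) (map_continuous (α η))).integral_comp_comm
          hint).symm
    _ = ∫ ζ, (η : ℂ) • (conj ((η * ζ : Circle) : ℂ) • α (η * ζ) v) ∂μ := by simp_rw [hshift]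
    _ = (η : ℂ) • ∫ ζ, conj (ζ : ℂ) • α ζ v ∂μ := by
        rw [integral_smul, integral_mul_left_eq_self (fun ξ : Circle => conj (ξ : ℂ) • α ξ v)]

end Circle

theorem stmt_11_general {A : Type*} [CStarAlgebra A]
    [MeasurableSpace Circle] [BorelSpace Circle]
    (μ : Measure Circle) [μ.IsHaarMeasure] [IsProbabilityMeasure μ]
    (α : Circle → A ≃⋆ₐ[ℂ] A)
    (hmul : ∀ ζ η : Circle, ∀ x : A, α (ζ * η) x = α ζ (α η x))
    (hcont : ∀ x : A, Continuous fun ζ : Circle => α ζ x)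
    (v : A) (hv : v ∈ unitary A) (ε₀ : ℝ)
    (hvε : ∀ ζ : Circle, ‖α ζ v - (ζ : ℂ) • v‖ ≤ ε₀) :
    let x : A := ∫ ζ : Circle, (starRingEnd ℂ) (ζ : ℂ) • α ζ v ∂μ
    ‖x‖ ≤ 1 ∧ ‖x - v‖ ≤ ε₀ ∧ ‖star x * x - 1‖ ≤ 2 * ε₀ ∧
      ∀ ζ : Circle, α ζ x = (ζ : ℂ) • x := by
  intro x
  have hint := integrable_conj_smul_of_continuous μ (hcont v)
  have hnorm : ‖x‖ ≤ 1 := by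
    simpa using norm_integral_le_of_norm_le_const (μ := μ) (.of_forall fun ζ => by
      simpa [norm_smul, Circle.norm_coe, StarAlgEquiv.norm_map] using
        CStarRing.norm_le_one_of_mem_unitary hv)
  have hdist : ‖x - v‖ ≤ ε₀ := norm_integral_sub_le_of_norm_sub_le hint
    (.of_forall fun ζ => (Circle.norm_conj_smul_sub ζ _ v).trans_le (hvε ζ))
  exact ⟨hnorm, hdist, (norm_star_mul_self_sub_one_le hv hnorm).trans (by linarith),
    map_integral_conj_smul_eq_smul μ α hmul hint⟩

/-- averaging a Rokhlin-type unitary over the circle: if `v` is a unitary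
with `‖α_ζ(v) − ζ·v‖ ≤ ε₀ < 1/2` for all `ζ`, then `x = ∫ conj(ζ)·α_ζ(v) dμ(ζ)` satisfies
`‖x‖ ≤ 1`, `‖x − v‖ ≤ ε₀`, `‖x*x − 1‖ ≤ 2ε₀`, and `α_ζ(x) = ζ·x` for all `ζ`. -/
theorem stmt_11 {A : Type*} [CStarAlgebra A]
    [MeasurableSpace Circle] [BorelSpace Circle]
    (μ : Measure Circle) [μ.IsHaarMeasure] [IsProbabilityMeasure μ]
    (α : Circle → A ≃⋆ₐ[ℂ] A)
    (hone : ∀ x : A, α 1 x = x)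
    (hmul : ∀ ζ η : Circle, ∀ x : A, α (ζ * η) x = α ζ (α η x))
    (hcont : ∀ x : A, Continuous fun ζ : Circle => α ζ x)
    (v : A) (hv : v ∈ unitary A) (ε₀ : ℝ) (hε₀ : ε₀ < 1 / 2)
    (hvε : ∀ ζ : Circle, ‖α ζ v - (ζ : ℂ) • v‖ ≤ ε₀) :
    let x : A := ∫ ζ : Circle, (starRingEnd ℂ) (ζ : ℂ) • α ζ v ∂μ
    ‖x‖ ≤ 1 ∧ ‖x - v‖ ≤ ε₀ ∧ ‖star x * x - 1‖ ≤ 2 * ε₀ ∧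
      ∀ ζ : Circle, α ζ x = (ζ : ℂ) • x :=
  stmt_11_general μ α hmul hcont v hv ε₀ hvε
end

section
/- Let A and B be unital C*-algebras, let α : 𝕋 → Aut(A) be an action with the Rokhlin property (for every ε > 0 and finite F ⊆ A there is a unitary u ∈ A with ‖α_ζ(u) − ζu‖ < ε for all ζ ∈ 𝕋 and ‖ua − au‖ < ε for a ∈ F), and let β : 𝕋 → Aut(B) be any action. Then for any C*-tensor product A ⊗ B on which the diagonal action (α ⊗ β)_ζ = α_ζ ⊗ β_ζ is defined, the action α ⊗ β has the Rokhlin property, witnessed by unitaries of the form u ⊗ 1_B. -/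
/-- if `α : 𝕋 → Aut(A)` has the Rokhlin property and `β : 𝕋 → Aut(B)` is any
action, then on any C*-tensor product `C` of `A` and `B` on which the diagonal action
`γ = α ⊗ β` is defined, `γ` has the Rokhlin property, witnessed by unitaries of the
form `u ⊗ 1_B`. -/
theorem stmt_12 {A B C : Type*} [CStarAlgebra A] [CStarAlgebra B] [CStarAlgebra C]
    (α : Circle → A ≃⋆ₐ[ℂ] A)
    (hαone : ∀ x : A, α 1 x = x)
    (hαmul : ∀ ζ η : Circle, ∀ x : A, α (ζ * η) x = α ζ (α η x))
    (hαcont : ∀ x : A, Continuous fun ζ : Circle => α ζ x)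
    (hαRokhlin : ∀ ε > (0 : ℝ), ∀ F : Finset A, ∃ u ∈ unitary A,
      (∀ ζ : Circle, ‖α ζ u - (ζ : ℂ) • u‖ < ε) ∧ ∀ a ∈ F, ‖u * a - a * u‖ < ε)
    (β : Circle → B ≃⋆ₐ[ℂ] B)
    (hβone : ∀ x : B, β 1 x = x)
    (hβmul : ∀ ζ η : Circle, ∀ x : B, β (ζ * η) x = β ζ (β η x))
    (hβcont : ∀ x : B, Continuous fun ζ : Circle => β ζ x)
    -- `C` plays the role of a C*-tensor product `A ⊗ B`:
    (ιA : A →⋆ₐ[ℂ] C) (ιB : B →⋆ₐ[ℂ] C)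
    (hcomm : ∀ (a : A) (b : B), ιA a * ιB b = ιB b * ιA a)
    (hdense : Dense ((Submodule.span ℂ {x : C | ∃ (a : A) (b : B), x = ιA a * ιB b} :
      Submodule ℂ C) : Set C))
    (hcross : ∀ (a : A) (b : B), ‖ιA a * ιB b‖ = ‖a‖ * ‖b‖)
    -- the diagonal action `γ = α ⊗ β` on `C`:
    (γ : Circle → C ≃⋆ₐ[ℂ] C)
    (hγone : ∀ x : C, γ 1 x = x)
    (hγmul : ∀ ζ η : Circle, ∀ x : C, γ (ζ * η) x = γ ζ (γ η x))
    (hγcont : ∀ x : C, Continuous fun ζ : Circle => γ ζ x)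
    (hγ : ∀ (ζ : Circle) (a : A) (b : B), γ ζ (ιA a * ιB b) = ιA (α ζ a) * ιB (β ζ b)) :
    ∀ ε > (0 : ℝ), ∀ F : Finset C, ∃ u ∈ unitary A,
      (∀ ζ : Circle, ‖γ ζ (ιA u) - (ζ : ℂ) • ιA u‖ < ε) ∧
      ∀ c ∈ F, ‖ιA u * c - c * ιA u‖ < ε := by
  classical
  intro ε hε F
  by_cases hC : Subsingleton C
  · refine ⟨1, one_mem (unitary A), fun ζ => ?_, fun c _ => ?_⟩
    · rw [Subsingleton.elim (γ ζ (ιA 1) - (ζ : ℂ) • ιA 1) 0, norm_zero]; exact hε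
    · rw [Subsingleton.elim (ιA 1 * c - c * ιA 1) 0, norm_zero]; exact hε
  · have : Nontrivial C := not_subsingleton_iff_nontrivial.mp hC
    -- B and A are nontrivial
    have hBnt : Nontrivial B := by
      refine ⟨1, 0, fun h => one_ne_zero (α := C) ?_⟩
      rw [← map_one ιB, h, map_zero]
    have hAnt : Nontrivial A := by
      refine ⟨1, 0, fun h => one_ne_zero (α := C) ?_⟩
      rw [← map_one ιA, h, map_zero]
    have hB1 : ‖(1 : B)‖ = 1 := norm_one
    have hnormA : ∀ x : A, ‖ιA x‖ = ‖x‖ := fun x => by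
      rw [← mul_one (ιA x), ← map_one ιB, hcross, hB1, mul_one]
    have hε3 : (0 : ℝ) < ε / 3 := by linarith
    -- approximate every c by a finite combination of elementary tensors
    have key : ∀ c : C, ∃ (n : ℕ) (f : Fin n → ℂ) (a : Fin n → A) (b : Fin n → B),
        ‖c - ∑ i, f i • (ιA (a i) * ιB (b i))‖ < ε / 3 := by
      intro c
      obtain ⟨y, hy_ball, hy_mem⟩ := Metric.dense_iff.mp hdense c (ε / 3) hε3
      obtain ⟨n, f, g, hsum⟩ := Submodule.mem_span_set'.mp hy_mem
      choose a b hab using fun i : Fin n => (g i).2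
      refine ⟨n, f, a, b, ?_⟩
      have : ∑ i, f i • (ιA (a i) * ιB (b i)) = y := by
        rw [← hsum]; exact Finset.sum_congr rfl fun i _ => by rw [← hab i]
      rw [this]
      have := Metric.mem_ball.mp hy_ball
      rw [dist_eq_norm] at this
      rwa [← norm_neg, neg_sub]
    choose n f a b hkey using key
    set K : ℝ := ∑ c ∈ F, ∑ i, ‖f c i‖ * ‖b c i‖ with hK
    have hK0 : 0 ≤ K :=
      Finset.sum_nonneg fun c _ => Finset.sum_nonneg fun i _ => by positivity
    set δ : ℝ := ε / 3 / (K + 1) with hδ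
    have hδ0 : 0 < δ := by positivity
    set ε' : ℝ := min ε δ with hε'
    have hε'0 : 0 < ε' := lt_min hε hδ0
    set G : Finset A := F.biUnion (fun c => Finset.univ.image (a c)) with hG
    obtain ⟨u, huU, h1, h2⟩ := hαRokhlin ε' hε'0 G
    have huA : ‖ιA u‖ = 1 := by rw [hnormA]; exact CStarRing.norm_of_mem_unitary huU
    refine ⟨u, huU, fun ζ => ?_, fun c hc => ?_⟩
    · -- equivariance
      have hγu : γ ζ (ιA u) = ιA (α ζ u) := by
        have h := hγ ζ u 1
        simpa [map_one, mul_one] using h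
      calc ‖γ ζ (ιA u) - (ζ : ℂ) • ιA u‖ = ‖ιA (α ζ u - (ζ : ℂ) • u)‖ := by
            rw [hγu, map_sub, map_smul]
        _ = ‖α ζ u - (ζ : ℂ) • u‖ := hnormA _
        _ < ε' := h1 ζ
        _ ≤ ε := min_le_left _ _
    · -- approximate centrality
      set y : C := ∑ i, f c i • (ιA (a c i) * ιB (b c i)) with hy
      have hcy : ‖c - y‖ < ε / 3 := hkey c
      -- commutator with each elementary tensor
      have helem : ∀ i : Fin (n c),
          ‖ιA u * (ιA (a c i) * ιB (b c i)) - (ιA (a c i) * ιB (b c i)) * ιA u‖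
            ≤ ε' * ‖b c i‖ := by
        intro i
        have haG : a c i ∈ G := Finset.mem_biUnion.mpr
          ⟨c, hc, Finset.mem_image.mpr ⟨i, Finset.mem_univ i, rfl⟩⟩
        have hswap : ιA (a c i) * ιB (b c i) * ιA u = ιA (a c i) * ιA u * ιB (b c i) := by
          rw [mul_assoc, ← hcomm u (b c i), ← mul_assoc]
        have hrw : ιA u * (ιA (a c i) * ιB (b c i)) - (ιA (a c i) * ιB (b c i)) * ιA u
            = ιA (u * a c i - a c i * u) * ιB (b c i) := by
          rw [hswap, map_sub, sub_mul, map_mul, map_mul]; noncomm_ring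
        rw [hrw, hcross]
        exact mul_le_mul_of_nonneg_right (le_of_lt (h2 _ haG)) (norm_nonneg _)
      -- commutator with y
      have hmid : ‖ιA u * y - y * ιA u‖ < ε / 3 := by
        have hrw : ιA u * y - y * ιA u = ∑ i, f c i •
            (ιA u * (ιA (a c i) * ιB (b c i)) - (ιA (a c i) * ιB (b c i)) * ιA u) := by
          rw [hy, Finset.mul_sum, Finset.sum_mul, ← Finset.sum_sub_distrib]
          exact Finset.sum_congr rfl fun i _ => by
            rw [mul_smul_comm, smul_mul_assoc, smul_sub]
        have hle : ‖ιA u * y - y * ιA u‖ ≤ ∑ i, ‖f c i‖ * (ε' * ‖b c i‖) := by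
          rw [hrw]
          refine le_trans (norm_sum_le _ _) (Finset.sum_le_sum fun i _ => ?_)
          rw [norm_smul]
          exact mul_le_mul_of_nonneg_left (helem i) (norm_nonneg _)
        have hKc : ∑ i, ‖f c i‖ * (ε' * ‖b c i‖) = ε' * ∑ i, ‖f c i‖ * ‖b c i‖ := by
          rw [Finset.mul_sum]; exact Finset.sum_congr rfl fun i _ => by ring
        have hKcK : ∑ i, ‖f c i‖ * ‖b c i‖ ≤ K := by
          rw [hK]
          exact Finset.single_le_sum
            (f := fun c => ∑ i : Fin (n c), ‖f c i‖ * ‖b c i‖)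
            (fun c _ => Finset.sum_nonneg fun i _ =>
              mul_nonneg (norm_nonneg _) (norm_nonneg _)) hc
        have : ε' * ∑ i, ‖f c i‖ * ‖b c i‖ ≤ δ * K :=
          mul_le_mul (min_le_right _ _) hKcK
            (Finset.sum_nonneg fun i _ => by positivity) (le_of_lt hδ0)
        have hδK : δ * K < ε / 3 := by
          have : δ * K < δ * (K + 1) := by nlinarith
          have h2 : δ * (K + 1) = ε / 3 := by
            rw [hδ]; field_simp
          linarith
        calc ‖ιA u * y - y * ιA u‖ ≤ ∑ i, ‖f c i‖ * (ε' * ‖b c i‖) := hle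
          _ = ε' * ∑ i, ‖f c i‖ * ‖b c i‖ := hKc
          _ ≤ δ * K := this
          _ < ε / 3 := hδK
      have hsplit : ιA u * c - c * ιA u
          = ιA u * (c - y) + (ιA u * y - y * ιA u) + (y - c) * ιA u := by noncomm_ring
      calc ‖ιA u * c - c * ιA u‖
          ≤ ‖ιA u * (c - y)‖ + ‖ιA u * y - y * ιA u‖ + ‖(y - c) * ιA u‖ := by
            rw [hsplit]; exact norm_add₃_le
        _ < ε / 3 + ε / 3 + ε / 3 := by
            have e1 : ‖ιA u * (c - y)‖ < ε / 3 := by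
              calc ‖ιA u * (c - y)‖ ≤ ‖ιA u‖ * ‖c - y‖ := norm_mul_le _ _
                _ = ‖c - y‖ := by rw [huA, one_mul]
                _ < ε / 3 := hcy
            have e3 : ‖(y - c) * ιA u‖ < ε / 3 := by
              calc ‖(y - c) * ιA u‖ ≤ ‖y - c‖ * ‖ιA u‖ := norm_mul_le _ _
                _ = ‖c - y‖ := by rw [huA, mul_one, norm_sub_rev]
                _ < ε / 3 := hcy
            linarith [hmid]
        _ = ε := by ring
end

section
/- Let (Aₙ, ιₙ) be a direct system of unital C*-algebras with unital injective connecting maps and limit A = lim Aₙ, and let α⁽ⁿ⁾ : 𝕋 → Aut(Aₙ) be actions compatible with the connecting maps (ιₙ ∘ α⁽ⁿ⁾_ζ = α⁽ⁿ⁺¹⁾_ζ ∘ ιₙ), inducing a limit action α : 𝕋 → Aut(A). If each α⁽ⁿ⁾ has the Rokhlin property, then α has the Rokhlin property. -/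
/-- a direct limit of circle actions with the Rokhlin property has the
Rokhlin property. The direct system with unital injective connecting maps is encoded as
an increasing sequence of unital *-subalgebras `B n` of the limit algebra `A` with dense
union, each invariant under the action and on which the restricted action has the
Rokhlin property. -/
theorem stmt_13 {A : Type*} [CStarAlgebra A]
    (B : ℕ → StarSubalgebra ℂ A) (hmono : Monotone B)
    (hdense : Dense (⋃ n, (B n : Set A)))
    (α : Circle → A ≃⋆ₐ[ℂ] A)
    (hone : ∀ x : A, α 1 x = x)
    (hmul : ∀ ζ η : Circle, ∀ x : A, α (ζ * η) x = α ζ (α η x))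
    (hcont : ∀ x : A, Continuous fun ζ : Circle => α ζ x)
    (hinv : ∀ (n : ℕ) (ζ : Circle), ∀ x ∈ B n, α ζ x ∈ B n)
    (hRokhlin : ∀ n : ℕ, ∀ ε > (0 : ℝ), ∀ F : Finset A, (F : Set A) ⊆ B n →
      ∃ u ∈ unitary A, u ∈ B n ∧
        (∀ ζ : Circle, ‖α ζ u - (ζ : ℂ) • u‖ < ε) ∧
        ∀ a ∈ F, ‖u * a - a * u‖ < ε) :
    ∀ ε > (0 : ℝ), ∀ F : Finset A, ∃ u ∈ unitary A,
      (∀ ζ : Circle, ‖α ζ u - (ζ : ℂ) • u‖ < ε) ∧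
      ∀ a ∈ F, ‖u * a - a * u‖ < ε := by
  classical
  intro ε hε F
  -- approximate every element of `A` by an element of some `B n` within `ε/4`
  have happrox : ∀ a : A, ∃ b : A, (∃ n : ℕ, b ∈ B n) ∧ ‖a - b‖ < ε / 4 := by
    intro a
    have := Metric.mem_closure_iff.mp (hdense a) (ε / 4) (by linarith)
    obtain ⟨b, hb, hdist⟩ := this
    obtain ⟨s, ⟨n, rfl⟩, hbn⟩ := hb
    exact ⟨b, ⟨n, hbn⟩, by rwa [← dist_eq_norm]⟩
  choose f hf hdist using happrox
  choose n hn using hf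
  set N : ℕ := F.sup n with hN
  have hfB : ∀ a ∈ F, f a ∈ B N := fun a ha =>
    hmono (Finset.le_sup ha) (hn a)
  have hsub : ((F.image f : Finset A) : Set A) ⊆ B N := by
    intro b hb
    simp only [Finset.coe_image, Set.mem_image, Finset.mem_coe] at hb
    obtain ⟨a, ha, rfl⟩ := hb
    exact hfB a ha
  obtain ⟨u, hu, _, hα, hcomm⟩ := hRokhlin N (ε / 2) (by linarith) (F.image f) hsub
  refine ⟨u, hu, fun ζ => lt_of_lt_of_le (hα ζ) (by linarith), fun a ha => ?_⟩
  have hcu : ‖u * f a - f a * u‖ < ε / 2 :=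
    hcomm (f a) (Finset.mem_image_of_mem f ha)
  have h1 : ‖u * (a - f a)‖ < ε / 4 := by
    rw [CStarRing.norm_mem_unitary_mul _ hu]; exact hdist a
  have h2 : ‖(f a - a) * u‖ < ε / 4 := by
    rw [CStarRing.norm_mul_mem_unitary _ hu, ← norm_neg, neg_sub]; exact hdist a
  have key : u * a - a * u =
      u * (a - f a) + (u * f a - f a * u) + (f a - a) * u := by noncomm_ring
  calc ‖u * a - a * u‖
      = ‖u * (a - f a) + (u * f a - f a * u) + (f a - a) * u‖ := by rw [key]
    _ ≤ ‖u * (a - f a)‖ + ‖u * f a - f a * u‖ + ‖(f a - a) * u‖ := norm_add₃_le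
    _ < ε := by linarith
end

section
/- Let A be a unital C*-algebra, let n be a positive integer, and let β : ℤ/n → Aut(A) be an action generated by β = β₁. Let v be a unitary in a unital C*-algebra B containing A with vbv* = β(b) for b ∈ A, and suppose there is a 'dual' ℤ/n-action β̂ on B fixing A pointwise with β̂ₖ(v) = e^{2πik/n}v and B^{β̂} = A. If u ∈ B is a unitary with β̂ₖ(u) = e^{2πik/n}u and ‖ub − bu‖ < ε for b in a finite set F ∪ {v}, then w = vu* lies in A, satisfies ‖β(w) − w‖ < ε (from ‖uv − vu‖ < ε), and ‖β(b) − wbw*‖ = ‖ub − bu‖ < ε for b ∈ F. -/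
/-- the algebraic core of "unitary Rokhlin property for the dual action
implies strong approximate innerness": in the crossed product picture, `w = v u*` lies
in `A`, almost commutes with `v` (i.e. `‖β(w) − w‖ < ε`), and approximately implements
`β` on `F`. -/
theorem stmt_16 {B : Type*} [CStarAlgebra B] (n : ℕ) [NeZero n]
    (A : StarSubalgebra ℂ B)
    (v : B) (hv : v ∈ unitary B)
    (hvA : ∀ a ∈ A, v * a * star v ∈ A)
    (βhat : ZMod n → B ≃⋆ₐ[ℂ] B)
    (hone : ∀ b : B, βhat 0 b = b)
    (hadd : ∀ j k : ZMod n, ∀ b : B, βhat (j + k) b = βhat j (βhat k b))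
    (hfixA : ∀ k : ZMod n, ∀ a ∈ A, βhat k a = a)
    (hvdual : ∀ k : ZMod n,
      βhat k v = Complex.exp (2 * Real.pi * Complex.I * (k.val : ℕ) / n) • v)
    (hfixedpt : ∀ b : B, (∀ k : ZMod n, βhat k b = b) → b ∈ A)
    (u : B) (hu : u ∈ unitary B)
    (hudual : ∀ k : ZMod n,
      βhat k u = Complex.exp (2 * Real.pi * Complex.I * (k.val : ℕ) / n) • u)
    (ε : ℝ) (F : Finset B) (hFA : (F : Set B) ⊆ A)
    (hcomm : ∀ b ∈ F, ‖u * b - b * u‖ < ε)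
    (hcommv : ‖u * v - v * u‖ < ε) :
    let w : B := v * star u
    w ∈ A ∧ ‖v * w * star v - w‖ < ε ∧
      ∀ b ∈ F, ‖v * b * star v - w * b * star w‖ < ε := by
  intro w
  have hstaru : star u ∈ unitary B := Unitary.star_mem hu
  have hstarv : star v ∈ unitary B := Unitary.star_mem hv
  have huu : u * star u = 1 := Unitary.mul_star_self_of_mem hu
  have huu' : star u * u = 1 := Unitary.star_mul_self_of_mem hu
  have hvv : v * star v = 1 := Unitary.mul_star_self_of_mem hv
  have hcc : ∀ k : ZMod n,
      Complex.exp (2 * Real.pi * Complex.I * (k.val : ℕ) / n) *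
        star (Complex.exp (2 * Real.pi * Complex.I * (k.val : ℕ) / n)) = 1 := by
    intro k
    rw [Complex.star_def, ← Complex.exp_conj, ← Complex.exp_add]
    have : (starRingEnd ℂ) (2 * Real.pi * Complex.I * (k.val : ℕ) / n)
        = -(2 * Real.pi * Complex.I * (k.val : ℕ) / n) := by
      simp only [map_div₀, map_mul, map_ofNat, Complex.conj_natCast, Complex.conj_ofReal,
        Complex.conj_I]
      ring
    rw [this, add_neg_cancel, Complex.exp_zero]
  refine ⟨?_, ?_, ?_⟩
  · apply hfixedpt
    intro k
    have h1 : βhat k w = βhat k v * star (βhat k u) := by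
      rw [map_mul, map_star]
    rw [h1, hvdual, hudual, star_smul, smul_mul_smul_comm, hcc k, one_smul]
  · have key : v * w * star v - w = v * (v * star u - star u * v) * star v := by
      rw [mul_sub, sub_mul, mul_assoc v (star u * v) (star v),
        mul_assoc (star u) v (star v), hvv, mul_one]
    rw [key, CStarRing.norm_mul_mem_unitary _ hstarv, CStarRing.norm_mem_unitary_mul _ hv]
    have h2 : v * star u - star u * v = star u * (u * v - v * u) * star u := by
      rw [mul_sub, ← mul_assoc, huu', one_mul, sub_mul,
        mul_assoc (star u) (v * u) (star u), mul_assoc v u (star u), huu, mul_one]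
    rw [h2, CStarRing.norm_mul_mem_unitary _ hstaru, CStarRing.norm_mem_unitary_mul _ hstaru]
    exact hcommv
  · intro b hb
    have h1 : star u * (u * b - b * u) = b - star u * b * u := by
      rw [mul_sub, ← mul_assoc, huu', one_mul, ← mul_assoc]
    have hinner : star u * (u * b - b * u) * star u * u = b - star u * b * u := by
      rw [mul_assoc (star u * (u * b - b * u)) (star u) u, h1, huu', mul_one]
    have key : v * b * star v - w * b * star w
        = v * (star u * (u * b - b * u) * star u * u) * star v := by
      rw [hinner, mul_sub, sub_mul]
      have h3 : v * (star u * b * u) * star v = w * b * star w := by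
        simp only [w, star_mul, star_star, mul_assoc]
      rw [h3]
    rw [key, CStarRing.norm_mul_mem_unitary _ hstarv, CStarRing.norm_mem_unitary_mul _ hv,
      CStarRing.norm_mul_mem_unitary _ hu, CStarRing.norm_mul_mem_unitary _ hstaru,
      CStarRing.norm_mem_unitary_mul _ hstaru]
    exact hcomm b hb
end
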